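/- Let d ≥ 2 and let a ∈ ℝ^{d×d} be symmetric and indefinite, i.e., its smallest eigenvalue λ₋ and largest eigenvalue λ₊ satisfy λ₋ < 0 < λ₊. Set r₋ := √(−λ₋/(λ₊ − λ₋)) and r₊ := √(λ₊/(λ₊ − λ₋)). Then max_{ξ ∈ S^{d−1}} (2‖aξ‖² − ⟨aξ, ξ⟩²) = λ₋² + λ₊², and a unit vector ξ attains this maximum if and only if ξ = r₋·x + r₊·y for some unit vectors x, y with a x = λ₋·x and a y = λ₊·y. -/

import Mathlib

/-!
Every eigenvalue of `a` lies in `[λ₋, λ₊]`, so `(a - λ₋)(λ₊ - a)` is positive semidefinite, and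
for a unit vector `ξ` with `Y = ⟨aξ, ξ⟩`
  `2‖aξ‖² - Y² = λ₋² + λ₊² - (Y - λ₋ - λ₊)² - 2⟨(a - λ₋)(λ₊ - a)ξ, ξ⟩`.
This gives the bound. Equality forces `Y = λ₋ + λ₊` and `(a - λ₋)(λ₊ - a)ξ = 0`; the latter
splits `ξ` into orthogonal `λ₋`- and `λ₊`-eigenvectors, whose squared lengths are then
determined by `‖ξ‖ = 1` and `Y = λ₋ + λ₊`.
-/

namespace Matrix

variable {n : Type*} [Fintype n]

-- The quantity maximized in `g_cc(a) = max_{|ξ| = 1} ccQuantity a ξ`.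
def ccQuantity (a : Matrix n n ℝ) (ξ : n → ℝ) : ℝ :=
  2 * (a *ᵥ ξ ⬝ᵥ a *ᵥ ξ) - (a *ᵥ ξ ⬝ᵥ ξ) ^ 2

theorem IsSymm.dotProduct_mulVec {a : Matrix n n ℝ} (ha : a.IsSymm) (x y : n → ℝ) :
    x ⬝ᵥ a *ᵥ y = a *ᵥ x ⬝ᵥ y := by
  rw [Matrix.dotProduct_mulVec, ← mulVec_transpose, ha.eq]

theorem IsSymm.dotProduct_eq_zero_of_mulVec_eq_smul {a : Matrix n n ℝ} (ha : a.IsSymm)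
    {l u : ℝ} (hlu : l ≠ u) {x y : n → ℝ} (hx : a *ᵥ x = l • x) (hy : a *ᵥ y = u • y) :
    x ⬝ᵥ y = 0 := by
  have h := ha.dotProduct_mulVec x y
  rw [hx, hy, dotProduct_smul, smul_dotProduct, smul_eq_mul, smul_eq_mul] at h
  have h' : (l - u) * (x ⬝ᵥ y) = 0 := by linarith
  exact (mul_eq_zero.1 h').resolve_left (sub_ne_zero.2 hlu)

theorem exists_unit_of_mulVec_eq_smul {a : Matrix n n ℝ} {μ c : ℝ} {v : n → ℝ}
    (hv : a *ᵥ v = μ • v) (hc : v ⬝ᵥ v = c) (hpos : 0 < c) :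
    ∃ x : n → ℝ, x ⬝ᵥ x = 1 ∧ a *ᵥ x = μ • x ∧ v = √c • x := by
  subst hc
  have hsqrt : √(v ⬝ᵥ v) ≠ 0 := Real.sqrt_ne_zero'.2 hpos
  refine ⟨(√(v ⬝ᵥ v))⁻¹ • v, ?_, ?_, ?_⟩
  · rw [smul_dotProduct, dotProduct_smul, smul_eq_mul, smul_eq_mul, ← mul_assoc, ← sq, inv_pow,
      Real.sq_sqrt hpos.le, inv_mul_cancel₀ hpos.ne']
  · rw [mulVec_smul, hv, smul_comm]
  · rw [smul_smul, mul_inv_cancel₀ hsqrt, one_smul]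

theorem dotProduct_smul_add_smul {x y : n → ℝ} (hx : x ⬝ᵥ x = 1) (hy : y ⬝ᵥ y = 1)
    (hxy : x ⬝ᵥ y = 0) (p q r w : ℝ) :
    (p • x + q • y) ⬝ᵥ (r • x + w • y) = p * r + q * w := by
  simp only [add_dotProduct, dotProduct_add, smul_dotProduct, dotProduct_smul, smul_eq_mul, hx, hy,
    hxy, dotProduct_comm y x]
  ring

theorem IsSymm.ccQuantity_sqrt_smul_add_sqrt_smul {a : Matrix n n ℝ} (ha : a.IsSymm) {l u : ℝ}
    (hl : l < 0) (hu : 0 < u) {x y : n → ℝ} (hx : x ⬝ᵥ x = 1) (hy : y ⬝ᵥ y = 1)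
    (hax : a *ᵥ x = l • x) (hay : a *ᵥ y = u • y) :
    (√(-l / (u - l)) • x + √(u / (u - l)) • y) ⬝ᵥ (√(-l / (u - l)) • x + √(u / (u - l)) • y) = 1 ∧
      ccQuantity a (√(-l / (u - l)) • x + √(u / (u - l)) • y) = l ^ 2 + u ^ 2 := by
  have hxy := ha.dotProduct_eq_zero_of_mulVec_eq_smul (hl.trans hu).ne hax hay
  have hul : 0 < u - l := by linarith
  set s := √(-l / (u - l))
  set t := √(u / (u - l))
  have hs : s * s = -l / (u - l) := Real.mul_self_sqrt (div_nonneg (by linarith) hul.le)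
  have ht : t * t = u / (u - l) := Real.mul_self_sqrt (div_nonneg hu.le hul.le)
  have haξ : a *ᵥ (s • x + t • y) = (s * l) • x + (t * u) • y := by
    rw [mulVec_add, mulVec_smul, mulVec_smul, hax, hay, smul_smul, smul_smul]
  simp only [ccQuantity, haξ, dotProduct_smul_add_smul hx hy hxy]
  constructor
  · rw [hs, ht]
    field_simp
    ring
  · rw [show 2 * (s * l * (s * l) + t * u * (t * u)) - (s * l * s + t * u * t) ^ 2 =
        2 * ((s * s) * l ^ 2 + (t * t) * u ^ 2) - ((s * s) * l + (t * t) * u) ^ 2 by ring, hs, ht]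
    field_simp
    ring

variable [DecidableEq n]

theorem exists_mulVec_eq_smul_of_mem_spectrum {a : Matrix n n ℝ} {μ : ℝ}
    (h : μ ∈ spectrum ℝ a) : ∃ v : n → ℝ, v ≠ 0 ∧ a *ᵥ v = μ • v := by
  rw [← Matrix.spectrum_toLin', ← Module.End.hasEigenvalue_iff_mem_spectrum] at h
  obtain ⟨v, hv⟩ := h.exists_hasEigenvector
  exact ⟨v, hv.2, by simpa using hv.apply_eq_smul⟩

open scoped MatrixOrder in
theorem IsHermitian.posSemidef_sub_smul_one_mul_smul_one_sub {a : Matrix n n ℝ}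
    (ha : a.IsHermitian) {l u : ℝ} (h : ∀ μ ∈ spectrum ℝ a, l ≤ μ ∧ μ ≤ u) :
    ((a - l • 1) * (u • 1 - a)).PosSemidef := by
  have hcfc : (a - l • 1) * (u • 1 - a) = cfc (fun x => (x - l) * (u - x)) a := by
    rw [cfc_mul _ _ a, cfc_sub _ _ a, cfc_sub _ _ a, cfc_id' ℝ a, cfc_const l a, cfc_const u a]
    simp [Algebra.algebraMap_eq_smul_one]
  rw [← Matrix.nonneg_iff_posSemidef, hcfc]
  exact cfc_nonneg fun x hx => mul_nonneg (sub_nonneg.2 (h x hx).1) (sub_nonneg.2 (h x hx).2)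

theorem sub_smul_one_mul_smul_one_sub_mulVec (a : Matrix n n ℝ) (l u : ℝ) (ξ : n → ℝ) :
    ((a - l • 1) * (u • 1 - a)) *ᵥ ξ = (l + u) • a *ᵥ ξ - (l * u) • ξ - a *ᵥ a *ᵥ ξ := by
  simp only [← mulVec_mulVec, sub_mulVec, mulVec_sub, smul_mulVec, mulVec_smul, one_mulVec]
  module

theorem exists_add_of_sub_smul_one_mul_smul_one_sub_mulVec_eq_zero
    {a : Matrix n n ℝ} {l u : ℝ} (hlu : l ≠ u) {ξ : n → ℝ}
    (h : ((a - l • 1) * (u • 1 - a)) *ᵥ ξ = 0) :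
    ∃ x y : n → ℝ, a *ᵥ x = l • x ∧ a *ᵥ y = u • y ∧ ξ = x + y := by
  rw [sub_smul_one_mul_smul_one_sub_mulVec, sub_eq_zero] at h
  refine ⟨(u - l)⁻¹ • (u • ξ - a *ᵥ ξ), (u - l)⁻¹ • (a *ᵥ ξ - l • ξ), ?_, ?_, ?_⟩
  · simp only [mulVec_smul, mulVec_sub, ← h]
    module
  · simp only [mulVec_smul, mulVec_sub, ← h]
    module
  · rw [← smul_add, show u • ξ - a *ᵥ ξ + (a *ᵥ ξ - l • ξ) = (u - l) • ξ by module, smul_smul,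
      inv_mul_cancel₀ (sub_ne_zero.2 hlu.symm), one_smul]

theorem IsSymm.dotProduct_sub_smul_one_mul_smul_one_sub_mulVec {a : Matrix n n ℝ}
    (ha : a.IsSymm) (l u : ℝ) (ξ : n → ℝ) :
    ξ ⬝ᵥ ((a - l • 1) * (u • 1 - a)) *ᵥ ξ =
      (l + u) * (a *ᵥ ξ ⬝ᵥ ξ) - l * u * (ξ ⬝ᵥ ξ) - (a *ᵥ ξ ⬝ᵥ a *ᵥ ξ) := by
  rw [sub_smul_one_mul_smul_one_sub_mulVec, dotProduct_sub, dotProduct_sub, dotProduct_smul,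
    dotProduct_smul, ha.dotProduct_mulVec ξ (a *ᵥ ξ), dotProduct_comm ξ (a *ᵥ ξ), smul_eq_mul,
    smul_eq_mul]

theorem IsSymm.ccQuantity_add_eq {a : Matrix n n ℝ} (ha : a.IsSymm) (l u : ℝ)
    {ξ : n → ℝ} (hξ : ξ ⬝ᵥ ξ = 1) :
    ccQuantity a ξ + (a *ᵥ ξ ⬝ᵥ ξ - (l + u)) ^ 2 +
      2 * (ξ ⬝ᵥ ((a - l • 1) * (u • 1 - a)) *ᵥ ξ) = l ^ 2 + u ^ 2 := by
  rw [ha.dotProduct_sub_smul_one_mul_smul_one_sub_mulVec, hξ, ccQuantity]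
  ring

section extremal

variable {a : Matrix n n ℝ} {l u : ℝ}

theorem IsSymm.ccQuantity_le (ha : a.IsSymm) (hspec : ∀ μ ∈ spectrum ℝ a, l ≤ μ ∧ μ ≤ u)
    {ξ : n → ℝ} (hξ : ξ ⬝ᵥ ξ = 1) : ccQuantity a ξ ≤ l ^ 2 + u ^ 2 := by
  have hM := (isHermitian_iff_isSymm.2 ha).posSemidef_sub_smul_one_mul_smul_one_sub hspec
  have hQ := hM.dotProduct_mulVec_nonneg ξ
  rw [star_trivial] at hQ
  nlinarith [ha.ccQuantity_add_eq l u hξ, sq_nonneg (a *ᵥ ξ ⬝ᵥ ξ - (l + u))]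

theorem IsSymm.dotProduct_eq_and_mulVec_eq_zero_of_ccQuantity_eq (ha : a.IsSymm)
    (hspec : ∀ μ ∈ spectrum ℝ a, l ≤ μ ∧ μ ≤ u) {ξ : n → ℝ}
    (hξ : ξ ⬝ᵥ ξ = 1) (heq : ccQuantity a ξ = l ^ 2 + u ^ 2) :
    a *ᵥ ξ ⬝ᵥ ξ = l + u ∧ ((a - l • 1) * (u • 1 - a)) *ᵥ ξ = 0 := by
  have hM := (isHermitian_iff_isSymm.2 ha).posSemidef_sub_smul_one_mul_smul_one_sub hspec
  have hQ := hM.dotProduct_mulVec_nonneg ξ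
  rw [star_trivial] at hQ
  have hsum := ha.ccQuantity_add_eq l u hξ
  have hY : (a *ᵥ ξ ⬝ᵥ ξ - (l + u)) ^ 2 = 0 := by
    nlinarith [sq_nonneg (a *ᵥ ξ ⬝ᵥ ξ - (l + u))]
  refine ⟨by linarith [pow_eq_zero_iff (n := 2) two_ne_zero |>.1 hY], ?_⟩
  rw [← hM.dotProduct_mulVec_zero_iff, star_trivial]
  nlinarith

theorem IsSymm.exists_eigenvectors_of_ccQuantity_eq (ha : a.IsSymm)
    (hspec : ∀ μ ∈ spectrum ℝ a, l ≤ μ ∧ μ ≤ u) (hl : l < 0) (hu : 0 < u) {ξ : n → ℝ}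
    (hξ : ξ ⬝ᵥ ξ = 1) (heq : ccQuantity a ξ = l ^ 2 + u ^ 2) :
    ∃ x y : n → ℝ, x ⬝ᵥ x = 1 ∧ y ⬝ᵥ y = 1 ∧ a *ᵥ x = l • x ∧ a *ᵥ y = u • y ∧
      ξ = √(-l / (u - l)) • x + √(u / (u - l)) • y := by
  have hlu : l ≠ u := (hl.trans hu).ne
  have hul : 0 < u - l := by linarith
  obtain ⟨hY, hker⟩ := ha.dotProduct_eq_and_mulVec_eq_zero_of_ccQuantity_eq hspec hξ heq
  obtain ⟨x', y', hx', hy', rfl⟩ :=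
    exists_add_of_sub_smul_one_mul_smul_one_sub_mulVec_eq_zero hlu hker
  have hxy := ha.dotProduct_eq_zero_of_mulVec_eq_smul hlu hx' hy'
  have hnorm : x' ⬝ᵥ x' + y' ⬝ᵥ y' = 1 := by
    rw [← hξ]
    simp only [add_dotProduct, dotProduct_add, hxy, dotProduct_comm y' x']
    ring
  have hlin : l * (x' ⬝ᵥ x') + u * (y' ⬝ᵥ y') = l + u := by
    rw [← hY, mulVec_add, hx', hy']
    simp only [add_dotProduct, dotProduct_add, smul_dotProduct, smul_eq_mul, hxy,
      dotProduct_comm y' x']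
    ring
  have hα : x' ⬝ᵥ x' = -l / (u - l) := by
    rw [eq_div_iff hul.ne']
    linear_combination -hlin + u * hnorm
  have hβ : y' ⬝ᵥ y' = u / (u - l) := by
    rw [eq_div_iff hul.ne']
    linear_combination hlin - l * hnorm
  obtain ⟨x, hx, hax, rfl⟩ := exists_unit_of_mulVec_eq_smul hx' hα (div_pos (by linarith) hul)
  obtain ⟨y, hy, hay, rfl⟩ := exists_unit_of_mulVec_eq_smul hy' hβ (div_pos hu hul)
  exact ⟨x, y, hx, hy, hax, hay, rfl⟩

theorem IsSymm.isGreatest_ccQuantity (ha : a.IsSymm) (hspec : ∀ μ ∈ spectrum ℝ a, l ≤ μ ∧ μ ≤ u)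
    (hl : l < 0) (hu : 0 < u) (hleig : ∃ v : n → ℝ, v ≠ 0 ∧ a *ᵥ v = l • v)
    (hueig : ∃ v : n → ℝ, v ≠ 0 ∧ a *ᵥ v = u • v) :
    IsGreatest (ccQuantity a '' {ξ | ξ ⬝ᵥ ξ = 1}) (l ^ 2 + u ^ 2) := by
  obtain ⟨v, hv0, hv⟩ := hleig
  obtain ⟨w, hw0, hw⟩ := hueig
  obtain ⟨x, hx, hax, -⟩ := exists_unit_of_mulVec_eq_smul hv rfl
    (by simpa using dotProduct_star_self_pos_iff.2 hv0)
  obtain ⟨y, hy, hay, -⟩ := exists_unit_of_mulVec_eq_smul hw rfl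
    (by simpa using dotProduct_star_self_pos_iff.2 hw0)
  obtain ⟨hunit, hval⟩ := ha.ccQuantity_sqrt_smul_add_sqrt_smul hl hu hx hy hax hay
  exact ⟨⟨_, hunit, hval⟩, by rintro _ ⟨ξ, hξ, rfl⟩; exact ha.ccQuantity_le hspec hξ⟩

theorem IsSymm.ccQuantity_eq_iff (ha : a.IsSymm) (hspec : ∀ μ ∈ spectrum ℝ a, l ≤ μ ∧ μ ≤ u)
    (hl : l < 0) (hu : 0 < u) {ξ : n → ℝ} (hξ : ξ ⬝ᵥ ξ = 1) :
    ccQuantity a ξ = l ^ 2 + u ^ 2 ↔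
      ∃ x y : n → ℝ, x ⬝ᵥ x = 1 ∧ y ⬝ᵥ y = 1 ∧ a *ᵥ x = l • x ∧ a *ᵥ y = u • y ∧
        ξ = √(-l / (u - l)) • x + √(u / (u - l)) • y := by
  refine ⟨ha.exists_eigenvectors_of_ccQuantity_eq hspec hl hu hξ, ?_⟩
  rintro ⟨x, y, hx, hy, hax, hay, rfl⟩
  exact (ha.ccQuantity_sqrt_smul_add_sqrt_smul hl hu hx hy hax hay).2

end extremal

end Matrix

open Matrix

theorem statement13_general (d : ℕ) (a : Matrix (Fin d) (Fin d) ℝ) (ha : a.IsSymm)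
    (lm lp : ℝ)
    (hlm : IsLeast {μ : ℝ | ∃ v : Fin d → ℝ, v ≠ 0 ∧ a.mulVec v = μ • v} lm)
    (hlp : IsGreatest {μ : ℝ | ∃ v : Fin d → ℝ, v ≠ 0 ∧ a.mulVec v = μ • v} lp)
    (hneg : lm < 0) (hpos : 0 < lp) :
    IsGreatest {g : ℝ | ∃ ξ : Fin d → ℝ, (∑ i, ξ i ^ 2) = 1 ∧
      g = 2 * (∑ i, (a.mulVec ξ i) ^ 2) - (∑ i, a.mulVec ξ i * ξ i) ^ 2}
      (lm ^ 2 + lp ^ 2) ∧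
    ∀ ξ : Fin d → ℝ, (∑ i, ξ i ^ 2) = 1 →
      (2 * (∑ i, (a.mulVec ξ i) ^ 2) - (∑ i, a.mulVec ξ i * ξ i) ^ 2 = lm ^ 2 + lp ^ 2 ↔
        ∃ x y : Fin d → ℝ, (∑ i, x i ^ 2) = 1 ∧ (∑ i, y i ^ 2) = 1 ∧
          a.mulVec x = lm • x ∧ a.mulVec y = lp • y ∧
          ξ = Real.sqrt (-lm / (lp - lm)) • x + Real.sqrt (lp / (lp - lm)) • y) := by
  have hspec : ∀ μ ∈ spectrum ℝ a, lm ≤ μ ∧ μ ≤ lp := fun μ hμ =>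
    have hμ' := exists_mulVec_eq_smul_of_mem_spectrum hμ
    ⟨hlm.2 hμ', hlp.2 hμ'⟩
  have hsq (v : Fin d → ℝ) : ∑ i, v i ^ 2 = v ⬝ᵥ v := by simp only [dotProduct, sq]
  have hcc (ξ : Fin d → ℝ) :
      2 * (∑ i, (a *ᵥ ξ) i ^ 2) - (∑ i, (a *ᵥ ξ) i * ξ i) ^ 2 = ccQuantity a ξ := by
    rw [hsq, ccQuantity]; rfl
  simp_rw [hcc, hsq]
  refine ⟨?_, fun ξ hξ => ha.ccQuantity_eq_iff hspec hneg hpos hξ⟩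
  convert ha.isGreatest_ccQuantity hspec hneg hpos hlm.1 hlp.1 using 1
  ext g
  simp only [Set.image, Set.mem_ofPred_eq, eq_comm]

/-- For an indefinite symmetric matrix `a` with extremal eigenvalues `λ₋ < 0 < λ₊`, the
quantity `2‖aξ‖² - ⟨aξ,ξ⟩²` is maximized over the unit sphere with value `λ₋² + λ₊²`,
exactly at `ξ = r₋ x + r₊ y` for unit extremal eigenvectors `x, y`. -/
theorem statement13 (d : ℕ) (hd : 2 ≤ d) (a : Matrix (Fin d) (Fin d) ℝ) (ha : a.IsSymm)
    (lm lp : ℝ)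
    (hlm : IsLeast {μ : ℝ | ∃ v : Fin d → ℝ, v ≠ 0 ∧ a.mulVec v = μ • v} lm)
    (hlp : IsGreatest {μ : ℝ | ∃ v : Fin d → ℝ, v ≠ 0 ∧ a.mulVec v = μ • v} lp)
    (hneg : lm < 0) (hpos : 0 < lp) :
    IsGreatest {g : ℝ | ∃ ξ : Fin d → ℝ, (∑ i, ξ i ^ 2) = 1 ∧
      g = 2 * (∑ i, (a.mulVec ξ i) ^ 2) - (∑ i, a.mulVec ξ i * ξ i) ^ 2}
      (lm ^ 2 + lp ^ 2) ∧
    ∀ ξ : Fin d → ℝ, (∑ i, ξ i ^ 2) = 1 →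
      (2 * (∑ i, (a.mulVec ξ i) ^ 2) - (∑ i, a.mulVec ξ i * ξ i) ^ 2 = lm ^ 2 + lp ^ 2 ↔
        ∃ x y : Fin d → ℝ, (∑ i, x i ^ 2) = 1 ∧ (∑ i, y i ^ 2) = 1 ∧
          a.mulVec x = lm • x ∧ a.mulVec y = lp • y ∧
          ξ = Real.sqrt (-lm / (lp - lm)) • x + Real.sqrt (lp / (lp - lm)) • y) :=
  statement13_general d a ha lm lp hlm hlp hneg hpos
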